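/- arXiv:1905.05234 — 5 statements merged into one kernel-verified Lean document; each statement's English description precedes it below -/
import Mathlib

section
/- Let H be a subgroup of GL(n, F) over a field F such that H is unipotent-by-abelian (i.e., H has a normal unipotent subgroup with abelian quotient; equivalently, the commutator subgroup H' is unipotent) and H is triangularizable. Then for all g, h in H, the element g*h - h*g of Mat(n, F) lies in the Jacobson radical of the F-enveloping algebra of H. -/
open Matrix

set_option maxHeartbeats 1000000

lemma diag_mul_tri {n : ℕ} {K : Type*} [CommRing K] {A B : Matrix (Fin n) (Fin n) K}
    (hA : A.BlockTriangular id) (hB : B.BlockTriangular id) (i : Fin n) :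
    (A * B) i i = A i i * B i i := by
  rw [Matrix.mul_apply]
  apply Finset.sum_eq_single_of_mem i (Finset.mem_univ i)
  intro j _ hj
  rcases lt_or_gt_of_ne hj with hlt | hgt
  · rw [hA (show (id j : Fin n) < id i from hlt), zero_mul]
  · rw [hB (show (id i : Fin n) < id j from hgt), mul_zero]

lemma strict_tri_pow_eq_zero {n : ℕ} {K : Type*} [CommRing K] {N : Matrix (Fin n) (Fin n) K}
    (h1 : N.BlockTriangular id) (h2 : ∀ i, N i i = 0) : N ^ n = 0 := by
  have key : ∀ k (i j : Fin n), (j : ℕ) < (i : ℕ) + k → (N ^ k) i j = 0 := by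
    intro k
    induction k with
    | zero =>
      intro i j hij
      rw [pow_zero, Matrix.one_apply_ne]
      intro e; rw [e] at hij; omega
    | succ k ih =>
      intro i j hij
      rw [pow_succ', Matrix.mul_apply]
      apply Finset.sum_eq_zero
      intro l _
      rcases le_or_gt (l : ℕ) (i : ℕ) with hle | hlt
      · rcases eq_or_lt_of_le hle with heq | hlt'
        · have : l = i := Fin.ext heq
          rw [this, h2 i, zero_mul]
        · rw [h1 (show (id l : Fin n) < id i from hlt'), zero_mul]
      · rw [ih l j (by omega), mul_zero]
  ext i j
  simp only [Matrix.zero_apply]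
  exact key n i j (by omega)

/-- A matrix is unipotent if `m - 1` is nilpotent. -/
def IsUnipotentMat {n : ℕ} {F : Type*} [Field F] (m : Matrix (Fin n) (Fin n) F) : Prop :=
  (m - 1) ^ n = 0

/-- A subgroup of `GL(n, F)` is triangularizable if it is simultaneously conjugate, over the
algebraic closure of `F`, to a group of upper triangular matrices. -/
def IsTriangularizable {n : ℕ} {F : Type*} [Field F] (H : Subgroup (GL (Fin n) F)) : Prop :=
  ∃ P : GL (Fin n) (AlgebraicClosure F), ∀ h ∈ H,
    (((P⁻¹ : GL (Fin n) (AlgebraicClosure F)) : Matrix (Fin n) (Fin n) (AlgebraicClosure F)) *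
        ((h : Matrix (Fin n) (Fin n) F)).map (algebraMap F (AlgebraicClosure F)) *
        (P : Matrix (Fin n) (Fin n) (AlgebraicClosure F))).BlockTriangular id

/-- If `H ≤ GL(n,F)` is unipotent-by-abelian (its commutator subgroup is unipotent) and
triangularizable, then `g h - h g` lies in the Jacobson radical of the enveloping algebra. -/
theorem stmt0 {n : ℕ} {F : Type*} [Field F] (H : Subgroup (GL (Fin n) F))
    (hUA : ∀ x ∈ ⁅H, H⁆, IsUnipotentMat ((x : GL (Fin n) F) : Matrix (Fin n) (Fin n) F))
    (hT : IsTriangularizable H)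
    (g h : GL (Fin n) F) (hg : g ∈ H) (hh : h ∈ H) :
    ∃ x ∈ (⊥ : Ideal (Algebra.adjoin F
        ((fun u : GL (Fin n) F => (u : Matrix (Fin n) (Fin n) F)) '' H))).jacobson,
      (x : Matrix (Fin n) (Fin n) F) =
        (g : Matrix (Fin n) (Fin n) F) * (h : Matrix (Fin n) (Fin n) F) -
        (h : Matrix (Fin n) (Fin n) F) * (g : Matrix (Fin n) (Fin n) F) := by
  classical
  obtain ⟨P, hP⟩ := hT
  set K := AlgebraicClosure F with hK
  set s : Set (Matrix (Fin n) (Fin n) F) :=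
    (fun u : GL (Fin n) F => (u : Matrix (Fin n) (Fin n) F)) '' H with hs
  set A := Algebra.adjoin F s with hA
  have hPP : (P : Matrix (Fin n) (Fin n) K) * (P⁻¹ : GL (Fin n) K) = 1 := P.mul_inv
  have hPP' : ((P⁻¹ : GL (Fin n) K) : Matrix (Fin n) (Fin n) K) * P = 1 := P.inv_mul
  set φ : Matrix (Fin n) (Fin n) F →+* Matrix (Fin n) (Fin n) K :=
    (algebraMap F K).mapMatrix with hφ
  set f : Matrix (Fin n) (Fin n) F →+* Matrix (Fin n) (Fin n) K :=
    { toFun := fun M => ((P⁻¹ : GL (Fin n) K) : Matrix (Fin n) (Fin n) K) * φ M * P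
      map_one' := by
        show ((P⁻¹ : GL (Fin n) K) : Matrix (Fin n) (Fin n) K) * φ 1 * P = 1
        rw [φ.map_one, mul_one, hPP']
      map_mul' := by
        intro M N
        show ((P⁻¹ : GL (Fin n) K) : Matrix (Fin n) (Fin n) K) * φ (M * N) * P
          = (((P⁻¹ : GL (Fin n) K) : Matrix (Fin n) (Fin n) K) * φ M * P)
            * (((P⁻¹ : GL (Fin n) K) : Matrix (Fin n) (Fin n) K) * φ N * P)
        simp only [φ.map_mul, mul_assoc]
        rw [show ((P : Matrix (Fin n) (Fin n) K)) * (((P⁻¹ : GL (Fin n) K) :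
            Matrix (Fin n) (Fin n) K) * (φ N * P)) = φ N * P from by
          rw [← mul_assoc, hPP, one_mul]]
      map_zero' := by
        show ((P⁻¹ : GL (Fin n) K) : Matrix (Fin n) (Fin n) K) * φ 0 * P = 0
        rw [φ.map_zero, mul_zero, zero_mul]
      map_add' := by
        intro M N
        show ((P⁻¹ : GL (Fin n) K) : Matrix (Fin n) (Fin n) K) * φ (M + N) * P
          = (((P⁻¹ : GL (Fin n) K) : Matrix (Fin n) (Fin n) K) * φ M * P)
            + (((P⁻¹ : GL (Fin n) K) : Matrix (Fin n) (Fin n) K) * φ N * P)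
        rw [φ.map_add, mul_add, add_mul] } with hfdef
  have f_apply : ∀ M, f M = ((P⁻¹ : GL (Fin n) K) : Matrix (Fin n) (Fin n) K) * φ M * P :=
    fun M => rfl
  have cancel : ∀ X : Matrix (Fin n) (Fin n) K,
      (P : Matrix (Fin n) (Fin n) K) * (((P⁻¹ : GL (Fin n) K) :
        Matrix (Fin n) (Fin n) K) * X * P) * ((P⁻¹ : GL (Fin n) K) :
        Matrix (Fin n) (Fin n) K) = X := by
    intro X
    simp only [← mul_assoc]
    rw [hPP, one_mul, mul_assoc, hPP, mul_one]
  have f_inj : Function.Injective f := by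
    intro M N hMN
    rw [f_apply, f_apply] at hMN
    have h2 : φ M = φ N := by
      rw [← cancel (φ M), hMN]
      exact cancel (φ N)
    ext i j
    have := congrFun (congrFun h2 i) j
    simp only [hφ, RingHom.mapMatrix_apply, Matrix.map_apply] at this
    exact (algebraMap F K).injective this
  -- every element of the adjoin algebra maps to a triangular matrix
  have hTriAll : ∀ m ∈ A, (f m).BlockTriangular id := by
    intro m hm
    induction hm using Algebra.adjoin_induction with
    | mem x hx =>
      obtain ⟨u, hu, rfl⟩ := hx
      exact hP u hu
    | algebraMap r =>
      have hsc : f ((algebraMap F (Matrix (Fin n) (Fin n) F)) r)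
          = (algebraMap F K r) • (1 : Matrix (Fin n) (Fin n) K) := by
        have hφr : φ ((algebraMap F (Matrix (Fin n) (Fin n) F)) r)
            = (algebraMap F K r) • (1 : Matrix (Fin n) (Fin n) K) := by
          ext i j
          by_cases hij : i = j <;>
            simp [hφ, Matrix.algebraMap_matrix_apply, hij, Matrix.one_apply]
        rw [f_apply, hφr, Matrix.mul_smul, Matrix.smul_mul, mul_one, hPP']
      rw [hsc]
      intro i j hij
      simp only [Matrix.smul_apply, smul_eq_mul]
      have hne : i ≠ j := ne_of_gt hij
      rw [Matrix.one_apply_ne hne, mul_zero]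
    | add x y hx hy ihx ihy => rw [f.map_add]; exact ihx.add ihy
    | mul x y hx hy ihx ihy => rw [f.map_mul]; exact ihx.mul ihy
  -- the commutator matrix
  set xm : Matrix (Fin n) (Fin n) F :=
    (g : Matrix (Fin n) (Fin n) F) * (h : Matrix (Fin n) (Fin n) F) -
      (h : Matrix (Fin n) (Fin n) F) * (g : Matrix (Fin n) (Fin n) F) with hxm
  have hgA : (g : Matrix (Fin n) (Fin n) F) ∈ A := Algebra.subset_adjoin ⟨g, hg, rfl⟩
  have hhA : (h : Matrix (Fin n) (Fin n) F) ∈ A := Algebra.subset_adjoin ⟨h, hh, rfl⟩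
  have hxmA : xm ∈ A := sub_mem (mul_mem hgA hhA) (mul_mem hhA hgA)
  have hxmTri : (f xm).BlockTriangular id := hTriAll xm hxmA
  have hxmDiag : ∀ i, (f xm) i i = 0 := by
    intro i
    rw [hxm, f.map_sub, f.map_mul, f.map_mul, Matrix.sub_apply,
      diag_mul_tri (hTriAll _ hgA) (hTriAll _ hhA) i,
      diag_mul_tri (hTriAll _ hhA) (hTriAll _ hgA) i]
    ring
  refine ⟨⟨xm, hxmA⟩, ?_, rfl⟩
  rw [Ideal.mem_jacobson_iff]
  intro y
  have hNpow : ((y * ⟨xm, hxmA⟩ : A)) ^ n = 0 := by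
    apply Subtype.ext
    rw [SubmonoidClass.coe_pow, ZeroMemClass.coe_zero]
    apply f_inj
    rw [f.map_pow, f.map_zero]
    have hmemN : ((y * ⟨xm, hxmA⟩ : A) : Matrix (Fin n) (Fin n) F) ∈ A :=
      (y * ⟨xm, hxmA⟩ : A).2
    have hNTri : (f ((y * ⟨xm, hxmA⟩ : A) : Matrix (Fin n) (Fin n) F)).BlockTriangular id :=
      hTriAll _ hmemN
    have hNDiag : ∀ i, (f ((y * ⟨xm, hxmA⟩ : A) : Matrix (Fin n) (Fin n) F)) i i = 0 := by
      intro i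
      have hco : ((y * ⟨xm, hxmA⟩ : A) : Matrix (Fin n) (Fin n) F)
          = ((y : Matrix (Fin n) (Fin n) F)) * xm := rfl
      rw [hco, f.map_mul, diag_mul_tri (hTriAll _ y.2) hxmTri i, hxmDiag i, mul_zero]
    exact strict_tri_pow_eq_zero hNTri hNDiag
  have hUnit : IsUnit ((1 : A) + y * ⟨xm, hxmA⟩) :=
    IsNilpotent.isUnit_one_add ⟨n, hNpow⟩
  obtain ⟨u, hu⟩ := hUnit
  refine ⟨(↑u⁻¹ : A), ?_⟩
  rw [Ideal.mem_bot]
  have h1 : (↑u⁻¹ : A) * y * ⟨xm, hxmA⟩ + ↑u⁻¹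
      = (↑u⁻¹ : A) * ((1 : A) + y * ⟨xm, hxmA⟩) := by
    rw [mul_assoc, mul_add, mul_one, add_comm]
  rw [h1, ← hu, Units.inv_mul, sub_self]
end

section
/- Let A be a nonzero finite-dimensional associative F-algebra of n×n matrices all of whose elements are nilpotent. Then the common nullspace {v ∈ F^n : a v = 0 for all a ∈ A} is nonzero. -/
/-!
An associative algebra of matrices is closed under commutators, so the image of `A` in
`Module.End F (Fin n → F)` is a Lie algebra of nilpotent endomorphisms. By Engel's theorem it acts
nilpotently on `Fin n → F`, and a nilpotent action on a nonzero module has a nonzero invariant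
vector, i.e. a common null vector of `A`.
-/

open Matrix

attribute [local instance 100] LieRing.ofAssociativeRing

theorem Module.End.exists_ne_zero_forall_apply_eq_zero_of_isNilpotent
    {R M : Type*} [CommRing R] [AddCommGroup M] [Module R M] [IsNoetherian R M] [Nontrivial M]
    (L : LieSubalgebra R (Module.End R M)) (hL : ∀ f ∈ L, IsNilpotent f) :
    ∃ v : M, v ≠ 0 ∧ ∀ f ∈ L, f v = 0 := by
  have : LieModule.IsNilpotent L M :=
    (LieModule.isNilpotent_iff_forall' (R := R)).mpr fun f ↦ hL f f.2
  have := LieModule.nontrivial_max_triv_of_isNilpotent R L M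
  obtain ⟨⟨v, hv⟩, hv0⟩ := exists_ne (0 : LieModule.maxTrivSubmodule R L M)
  exact ⟨v, fun h ↦ hv0 (Subtype.ext h),
    fun f hf ↦ (LieModule.mem_maxTrivSubmodule R L M v).mp hv ⟨f, hf⟩⟩

def NonUnitalSubalgebra.toLieSubalgebra {R A : Type*} [CommRing R] [Ring A] [Algebra R A]
    (S : NonUnitalSubalgebra R A) : LieSubalgebra R A :=
  { S.toSubmodule with
    lie_mem' := fun hx hy ↦ by
      rw [Ring.lie_def]
      exact S.toSubmodule.sub_mem (S.mul_mem hx hy) (S.mul_mem hy hx) }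

/-- A nonzero (non-unital) algebra of `n × n` matrices all of whose elements are nilpotent
has nonzero common nullspace. -/
theorem stmt3 {n : ℕ} {F : Type*} [Field F]
    (A : NonUnitalSubalgebra F (Matrix (Fin n) (Fin n) F))
    (hA : A ≠ ⊥)
    (hnil : ∀ a ∈ A, a ^ n = 0) :
    ∃ v : Fin n → F, v ≠ 0 ∧ ∀ a ∈ A, a *ᵥ v = 0 := by
  -- supplies `Nontrivial (Fin n → F)`; for `n = 0` the matrix algebra is trivial, so `A = ⊥`
  have : NeZero n := ⟨by rintro rfl; exact hA (Subsingleton.elim _ _)⟩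
  let L := (A.map (toLinAlgEquiv' (R := F) (n := Fin n))).toLieSubalgebra
  obtain ⟨v, hv0, hv⟩ := Module.End.exists_ne_zero_forall_apply_eq_zero_of_isNilpotent L <| by
    intro f hf
    obtain ⟨a, ha, rfl⟩ := NonUnitalSubalgebra.mem_map.mp hf
    exact ⟨n, by rw [← map_pow, hnil a ha, map_zero]⟩
  refine ⟨v, hv0, fun a ha ↦ ?_⟩
  rw [← toLinAlgEquiv'_apply]
  exact hv _ (NonUnitalSubalgebra.mem_map.mpr ⟨a, ha, rfl⟩)
end

section
/- Let H ≤ GL(n, F) be a unipotent subgroup. Then the F-linear span of {h − 1 : h ∈ H} is closed under multiplication, i.e., it is a (non-unital) subalgebra of Mat(n, F), and moreover this subalgebra is nilpotent of index at most n. -/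
/-!
Over an algebraically closed field `K`, let `S` be a monoid of unipotent elements acting on a
finite-dimensional module `M`. If `M` is simple over the algebra generated by `S`, Burnside's
theorem (Schur's lemma plus Jacobson density) says that this algebra maps onto `End K M`. For
`s, t ∈ S` the element `(s - 1) t = (s t - 1) - (t - 1)` acts with trace zero, so the action of
`s - 1` is orthogonal to all of `End K M` for the nondegenerate trace form, hence zero. In general
one splits `M` along a proper submodule `N`: a product of `dim (M ⧸ N)` elements of the span of
`S - 1` maps `M` into `N`, and `dim N` further factors kill `N`. Nilpotency of a product of
matrices can be tested after extending scalars to an algebraic closure.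
-/

open Module Submodule

theorem mul_mem_span_sub_one {F A : Type*} [CommRing F] [Ring A] [Algebra F A] (S : Submonoid A)
    {a b : A} (ha : a ∈ span F ((· - 1) '' (S : Set A)))
    (hb : b ∈ span F ((· - 1) '' (S : Set A))) :
    a * b ∈ span F ((· - 1) '' (S : Set A)) := by
  refine (?_ : span F _ * span F _ ≤ span F _) (mul_mem_mul ha hb)
  rw [span_mul_span, span_le]
  rintro _ ⟨_, ⟨s, hs, rfl⟩, _, ⟨t, ht, rfl⟩, rfl⟩
  change (s - 1) * (t - 1) ∈ span F _
  rw [show (s - 1) * (t - 1) = (s * t - 1) - (s - 1) - (t - 1) by noncomm_ring]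
  exact sub_mem (sub_mem (subset_span ⟨_, S.mul_mem hs ht, rfl⟩) (subset_span ⟨s, hs, rfl⟩))
    (subset_span ⟨t, ht, rfl⟩)

section Kolchin

variable {K R M : Type*} [Field K] [AddCommGroup M] [Module K M] [FiniteDimensional K M]

theorem LinearMap.eq_zero_of_forall_trace_mul_eq_zero {a : Module.End K M}
    (h : ∀ T : Module.End K M, LinearMap.trace K M (a * T) = 0) : a = 0 := by
  ext m
  rw [LinearMap.zero_apply, ← Module.forall_dual_apply_eq_zero_iff K]
  intro f
  have : a * f.smulRight m = f.smulRight (a m) := by ext; simp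
  simpa [this] using h (f.smulRight m)

variable [Ring R] [Algebra K R] [Module R M] [IsScalarTower K R M]

theorem IsSimpleModule.lsmul_surjective_of_isAlgClosed [IsAlgClosed K] [IsSimpleModule R M] :
    Function.Surjective (Algebra.lsmul K K M : R →ₐ[K] Module.End K M) := by
  classical
  intro T
  let T' : Module.End (Module.End R M) M :=
    { toFun := T
      map_add' := T.map_add
      map_smul' := fun g m ↦ by
        obtain ⟨μ, rfl⟩ :=
          (IsSimpleModule.algebraMap_end_bijective_of_isAlgClosed K (A := R) (V := M)).2 g
        simp }
  let b := Module.finBasis K M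
  obtain ⟨r, hr⟩ := jacobson_density T' (Finset.univ.image b)
  exact ⟨r, b.ext fun i ↦ (hr (b i) (by simp)).symm⟩

theorem IsSimpleModule.sub_one_smul_eq_zero_of_unipotent [IsAlgClosed K] [IsSimpleModule R M]
    {S : Submonoid R} (hS : Algebra.adjoin K (S : Set R) = ⊤)
    (hunip : ∀ s ∈ S, ∃ k : ℕ, ∀ m : M, (s - 1) ^ k • m = 0) {s : R} (hs : s ∈ S) (m : M) :
    (s - 1) • m = 0 := by
  let ρ : R →ₐ[K] Module.End K M := Algebra.lsmul K K M
  have trace_sub_one : ∀ t ∈ S, LinearMap.trace K M (ρ (t - 1)) = 0 := fun t ht ↦ by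
    obtain ⟨k, hk⟩ := hunip t ht
    refine (LinearMap.isNilpotent_trace_of_isNilpotent ⟨k, ?_⟩).eq_zero
    ext m
    rw [← map_pow]
    exact hk m
  have hspan : span K (S : Set R) = ⊤ := by
    rw [← Submonoid.closure_eq S, ← Algebra.adjoin_eq_span, hS, Algebra.top_toSubmodule]
  have htrace (r : R) : LinearMap.trace K M (ρ (s - 1) * ρ r) = 0 := by
    induction (hspan ▸ mem_top : r ∈ span K (S : Set R)) using span_induction with
    | mem t ht =>
      rw [← map_mul, show (s - 1) * t = (s * t - 1) - (t - 1) by noncomm_ring, map_sub, map_sub,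
        trace_sub_one _ (S.mul_mem hs ht), trace_sub_one t ht, sub_zero]
    | zero => simp
    | add x y _ _ hx hy => rw [map_add, mul_add, map_add, hx, hy, add_zero]
    | smul c x _ hx => rw [map_smul, mul_smul_comm, map_smul, hx, smul_zero]
  have hzero : ρ (s - 1) = 0 := LinearMap.eq_zero_of_forall_trace_mul_eq_zero fun T ↦ by
    obtain ⟨r, hr⟩ := IsSimpleModule.lsmul_surjective_of_isAlgClosed (K := K) (R := R) T
    exact hr ▸ htrace r
  simpa [ρ, sub_smul] using congr($hzero m)

theorem IsSimpleModule.smul_eq_zero_of_mem_span_sub_one [IsAlgClosed K] [IsSimpleModule R M]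
    {S : Submonoid R} (hS : Algebra.adjoin K (S : Set R) = ⊤)
    (hunip : ∀ s ∈ S, ∃ k : ℕ, ∀ m : M, (s - 1) ^ k • m = 0) {x : R}
    (hx : x ∈ span K ((· - 1) '' (S : Set R))) (m : M) :
    x • m = 0 := by
  induction hx using span_induction with
  | mem x hx =>
    obtain ⟨s, hs, rfl⟩ := hx
    exact IsSimpleModule.sub_one_smul_eq_zero_of_unipotent hS hunip hs m
  | zero => exact zero_smul R m
  | add x y _ _ hx hy => rw [add_smul, hx, hy, add_zero]
  | smul c x _ hx => rw [smul_assoc, hx, smul_zero]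

theorem list_prod_smul_eq_zero_of_adjoin_eq_top [IsAlgClosed K]
    {S : Submonoid R} (hS : Algebra.adjoin K (S : Set R) = ⊤)
    (hunip : ∀ s ∈ S, ∃ k : ℕ, ∀ m : M, (s - 1) ^ k • m = 0) {l : List R}
    (hl : ∀ x ∈ l, x ∈ span K ((· - 1) '' (S : Set R))) (hlen : finrank K M ≤ l.length) (m : M) :
    l.prod • m = 0 := by
  induction hd : finrank K M using Nat.strong_induction_on generalizing M l with
  | _ d ih =>
  rcases subsingleton_or_nontrivial M with hM | hM
  · exact Subsingleton.elim _ _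
  by_cases hsimple : ∀ N : Submodule R M, N = ⊥ ∨ N = ⊤
  · have : IsSimpleModule R M := { eq_bot_or_eq_top := hsimple }
    obtain _ | ⟨x, l⟩ := l
    · have := Module.finrank_pos (R := K) (M := M)
      rw [List.length_nil] at hlen
      omega
    · rw [List.prod_cons, mul_smul,
        IsSimpleModule.smul_eq_zero_of_mem_span_sub_one hS hunip (hl x List.mem_cons_self)]
  push Not at hsimple
  obtain ⟨N, hN_bot, hN_top⟩ := hsimple
  have : FiniteDimensional K N := .of_injective (N.subtype.restrictScalars K) Subtype.val_injective
  have hsum : finrank K (M ⧸ N) + finrank K N = d := by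
    rw [← hd, ← (Submodule.Quotient.restrictScalarsEquiv K N).finrank_eq]
    exact (N.restrictScalars K).finrank_quotient_add_finrank
  have hN_pos : 0 < finrank K N := Module.finrank_pos_iff.mpr (nontrivial_iff_ne_bot.mpr hN_bot)
  have hQ_pos : 0 < finrank K (M ⧸ N) :=
    Module.finrank_pos_iff.mpr (Submodule.Quotient.nontrivial_iff.mpr hN_top)
  set k := l.length - finrank K (M ⧸ N)
  have hdrop : (l.drop k).prod • m ∈ N := by
    rw [← Submodule.Quotient.mk_eq_zero, Submodule.Quotient.mk_smul]
    refine ih _ (by omega) (fun s hs ↦ ?_) (fun x hx ↦ hl x (List.mem_of_mem_drop hx))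
      (by rw [List.length_drop]; omega) _ rfl
    obtain ⟨j, hj⟩ := hunip s hs
    exact ⟨j, fun q ↦ Submodule.Quotient.induction_on N q fun m ↦ by
      rw [← Submodule.Quotient.mk_smul, hj, Submodule.Quotient.mk_zero]⟩
  have htake : (l.take k).prod • (⟨_, hdrop⟩ : N) = 0 := by
    refine ih _ (by omega) (fun s hs ↦ ?_) (fun x hx ↦ hl x (List.mem_of_mem_take hx))
      (by rw [List.length_take]; omega) _ rfl
    obtain ⟨j, hj⟩ := hunip s hs
    exact ⟨j, fun p ↦ Subtype.ext (hj p)⟩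
  rw [← List.prod_take_mul_prod_drop l k, mul_smul]
  simpa using congr(($htake : M))

theorem list_prod_smul_eq_zero_of_unipotent [IsAlgClosed K] (S : Submonoid R)
    (hunip : ∀ s ∈ S, ∃ k : ℕ, ∀ m : M, (s - 1) ^ k • m = 0) {l : List R}
    (hl : ∀ x ∈ l, x ∈ span K ((· - 1) '' (S : Set R))) (hlen : finrank K M ≤ l.length) (m : M) :
    l.prod • m = 0 := by
  set A := Algebra.adjoin K (S : Set R)
  let S' : Submonoid A := S.comap A.val
  have hspan : span K ((· - 1) '' (S : Set R)) =
      (span K ((· - 1) '' (S' : Set A))).map A.val.toLinearMap := by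
    rw [Submodule.map_span, ← Set.image_comp]
    congr 1
    ext y
    constructor
    · rintro ⟨s, hs, rfl⟩
      exact ⟨⟨s, Algebra.subset_adjoin hs⟩, hs, rfl⟩
    · rintro ⟨a, ha, rfl⟩
      exact ⟨a, ha, rfl⟩
  have hlA : ∀ x ∈ l, x ∈ A := fun x hx ↦ by
    obtain ⟨a, -, rfl⟩ := mem_map.mp (hspan ▸ hl x hx)
    exact a.2
  lift l to List A using hlA
  rw [← SubmonoidClass.coe_list_prod]
  refine list_prod_smul_eq_zero_of_adjoin_eq_top (S := S') Algebra.adjoin_adjoin_coe_preimage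
    (fun s hs ↦ hunip s hs) (fun x hx ↦ ?_) (by simpa using hlen) m
  obtain ⟨a, ha, hax⟩ := mem_map.mp (hspan ▸ hl x (List.mem_map_of_mem hx))
  exact Subtype.ext hax ▸ ha

end Kolchin

theorem Matrix.list_prod_eq_zero_of_unipotent {F ι : Type*} [Field F] [Fintype ι] [DecidableEq ι]
    (S : Submonoid (Matrix ι ι F)) (hS : ∀ s ∈ S, IsNilpotent (s - 1)) {l : List (Matrix ι ι F)}
    (hl : ∀ x ∈ l, x ∈ span F ((· - 1) '' (S : Set (Matrix ι ι F))))
    (hlen : Fintype.card ι ≤ l.length) : l.prod = 0 := by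
  let K := AlgebraicClosure F
  let φ : Matrix ι ι F →ₐ[F] Module.End K (ι → K) :=
    ((Matrix.toLinAlgEquiv' (R := K) (n := ι)).toAlgHom.restrictScalars F).comp
      (Algebra.ofId F K).mapMatrix
  have hφ : Function.Injective φ :=
    (Matrix.toLinAlgEquiv' (R := K) (n := ι)).injective.comp
      (Matrix.map_injective (algebraMap F K).injective)
  have hunip : ∀ s ∈ S.map φ, ∃ k : ℕ, ∀ v : ι → K, (s - 1) ^ k • v = 0 := by
    rintro _ ⟨s, hs, rfl⟩
    obtain ⟨k, hk⟩ := hS s hs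
    exact ⟨k, fun v ↦ by rw [← map_one φ, ← map_sub, ← map_pow, hk, map_zero]; rfl⟩
  have hl' : ∀ x ∈ l.map φ, x ∈ span K ((· - 1) '' (S.map φ : Set (Module.End K (ι → K)))) := by
    have himage : φ '' ((· - 1) '' (S : Set (Matrix ι ι F))) = (· - 1) '' (S.map φ : Set _) := by
      rw [Set.image_image, Submonoid.coe_map, Set.image_image]
      simp only [map_sub, map_one]
    simp only [List.mem_map]
    rintro _ ⟨x, hx, rfl⟩
    refine span_le_restrictScalars F K _ (himage ▸ ?_)
    exact apply_mem_span_image_of_mem_span φ.toLinearMap (hl x hx)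
  apply hφ
  rw [map_list_prod, map_zero]
  refine LinearMap.ext fun v ↦ ?_
  exact list_prod_smul_eq_zero_of_unipotent (S.map φ) hunip hl' (by simpa using hlen) v

open Matrix

/-- For a unipotent subgroup `H ≤ GL(n,F)`, the `F`-linear span of `{h - 1 : h ∈ H}` is
closed under multiplication, and is nilpotent of index at most `n`. -/
theorem stmt12 {n : ℕ} {F : Type*} [Field F] (H : Subgroup (GL (Fin n) F))
    (hH : ∀ h ∈ H, ((h : Matrix (Fin n) (Fin n) F) - 1) ^ n = 0) :
    (∀ a ∈ Submodule.span F
        {y : Matrix (Fin n) (Fin n) F | ∃ h ∈ H, y = (h : Matrix (Fin n) (Fin n) F) - 1},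
     ∀ b ∈ Submodule.span F
        {y : Matrix (Fin n) (Fin n) F | ∃ h ∈ H, y = (h : Matrix (Fin n) (Fin n) F) - 1},
      a * b ∈ Submodule.span F
        {y : Matrix (Fin n) (Fin n) F | ∃ h ∈ H, y = (h : Matrix (Fin n) (Fin n) F) - 1}) ∧
    (∀ l : List (Matrix (Fin n) (Fin n) F),
      (∀ x ∈ l, x ∈ Submodule.span F
        {y : Matrix (Fin n) (Fin n) F | ∃ h ∈ H, y = (h : Matrix (Fin n) (Fin n) F) - 1}) →
      l.length = n → l.prod = 0) := by
  let S : Submonoid (Matrix (Fin n) (Fin n) F) := H.toSubmonoid.map (Units.coeHom _)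
  have hset : {y : Matrix (Fin n) (Fin n) F | ∃ h ∈ H, y = (h : Matrix (Fin n) (Fin n) F) - 1} =
      (· - 1) '' (S : Set (Matrix (Fin n) (Fin n) F)) := by
    ext y
    simp [S, eq_comm]
  rw [hset]
  refine ⟨fun a ha b hb ↦ mul_mem_span_sub_one S ha hb, fun l hl hlen ↦ ?_⟩
  refine Matrix.list_prod_eq_zero_of_unipotent S ?_ hl (by simp [hlen])
  rintro _ ⟨h, hh, rfl⟩
  exact ⟨n, hH h hh⟩
end

section
/- Let G ≤ GL(n, F) with F of characteristic zero, and let N be a normal subgroup of finite index in G such that every element of N of finite order is the identity (N is torsion-free). Then G is central-by-finite (G/Z(G) is finite) if and only if N is central in G. -/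
/-
If the centre has finite index, commutators depend only on cosets of the centre, so there are
finitely many of them and by Schur's theorem the commutator subgroup `G'` is finite. For `x`
in the normal subgroup `N`, every `⁅x, g⁆` lies in `N ∩ G'`, hence has finite order, hence is
trivial as `N` is torsion-free; so `N` is central. Conversely, a central subgroup of finite index
makes the centre of finite index.
-/

open scoped commutatorElement

namespace Subgroup

variable {G : Type*} [Group G]

theorem commutatorElement_mul_mem_center {z w : G} (g h : G) (hz : z ∈ center G)
    (hw : w ∈ center G) : ⁅g * z, h * w⁆ = ⁅g, h⁆ := by
  have hz_comm (c : G) : ⁅z, c⁆ = 1 :=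
    commutatorElement_eq_one_iff_mul_comm.mpr (mem_center_iff.mp hz c).symm
  have hw_comm (c : G) : ⁅c, w⁆ = 1 :=
    commutatorElement_eq_one_iff_mul_comm.mpr (mem_center_iff.mp hw c)
  rw [commutatorElement_mul_left_eq_conj_mul, hz_comm, commutatorElement_mul_right_eq_mul_conj,
    hw_comm]
  group

theorem finite_commutatorSet_of_finiteIndex_center [(center G).FiniteIndex] :
    (commutatorSet G).Finite := by
  have : Finite (G ⧸ center G) := finite_quotient_of_finiteIndex
  refine (Set.finite_range fun p : (G ⧸ center G) × (G ⧸ center G) =>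
    ⁅p.1.out, p.2.out⁆).subset ?_
  rintro _ ⟨g, h, rfl⟩
  obtain ⟨z, hz⟩ := QuotientGroup.mk_out_eq_mul (center G) g
  obtain ⟨w, hw⟩ := QuotientGroup.mk_out_eq_mul (center G) h
  exact ⟨(g, h), by simp only [hz, hw, commutatorElement_mul_mem_center g h z.2 w.2]⟩

theorem le_center_of_finite_commutator [Finite (_root_.commutator G)] (N : Subgroup G) [N.Normal]
    (htf : ∀ x ∈ N, IsOfFinOrder x → x = 1) : N ≤ center G := by
  intro x hx
  refine mem_center_iff.mpr fun g => (commutatorElement_eq_one_iff_mul_comm.mp ?_).symm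
  have hmem : ⁅x, g⁆ ∈ ⁅N, ⊤⁆ := commutator_mem_commutator hx (mem_top g)
  have hfin : IsOfFinOrder ⁅x, g⁆ :=
    Submonoid.isOfFinOrder_coe.mpr <| isOfFinOrder_of_finite
      (⟨_, commutator_mono le_top le_rfl hmem⟩ : _root_.commutator G)
  exact htf _ (commutator_le_left N ⊤ hmem) hfin

end Subgroup

open Matrix

theorem stmt14_general {n : ℕ} {F : Type*} [Field F]
    (G : Subgroup (GL (Fin n) F)) (N : Subgroup G)
    (hnorm : N.Normal) (hfin : N.FiniteIndex)
    (htf : ∀ x ∈ N, IsOfFinOrder x → x = 1) :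
    (Subgroup.center G).FiniteIndex ↔ N ≤ Subgroup.center G := by
  constructor
  · intro
    have : Finite (commutatorSet G) :=
      Subgroup.finite_commutatorSet_of_finiteIndex_center.to_subtype
    exact Subgroup.le_center_of_finite_commutator N htf
  · exact Subgroup.finiteIndex_of_le

/-- Let `G ≤ GL(n,F)`, `char F = 0`, and `N ⊴ G` of finite index with `N` torsion-free.
Then `G` is central-by-finite iff `N` is central in `G`. -/
theorem stmt14 {n : ℕ} {F : Type*} [Field F] [CharZero F]
    (G : Subgroup (GL (Fin n) F)) (N : Subgroup G)
    (hnorm : N.Normal) (hfin : N.FiniteIndex)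
    (htf : ∀ x ∈ N, IsOfFinOrder x → x = 1) :
    (Subgroup.center G).FiniteIndex ↔ N ≤ Subgroup.center G :=
  stmt14_general G N hnorm hfin htf
end

section
/- (Schur) If G is a group with G/Z(G) finite, then the commutator subgroup G' is finite. -/
/-!
A commutator `⁅g, h⁆` only depends on the cosets of `g` and `h` modulo the center, so `G` has at
most `[G : Z(G)]²` commutators. By Mathlib's form of Schur's theorem (Schreier's lemma plus the
transfer `G → Z(G)`), a group with finitely many commutators has a finite commutator subgroup.
-/

open scoped commutatorElement

section

variable {G : Type*} [Group G]

theorem commutatorElement_mul_mem_center_left (g h : G) {z : G} (hz : z ∈ Subgroup.center G) :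
    ⁅g * z, h⁆ = ⁅g, h⁆ := by
  rw [commutatorElement_def, commutatorElement_def, mul_assoc g z h,
    ← Subgroup.mem_center_iff.mp hz h]
  group

theorem commutatorElement_mul_mem_center_right (g h : G) {z : G} (hz : z ∈ Subgroup.center G) :
    ⁅g, h * z⁆ = ⁅g, h⁆ := by
  rw [← commutatorElement_inv, commutatorElement_mul_mem_center_left h g hz, commutatorElement_inv]

theorem commutatorElement_eq_of_mk_eq {g g' h h' : G}
    (hg : (g : G ⧸ Subgroup.center G) = g') (hh : (h : G ⧸ Subgroup.center G) = h') :
    ⁅g, h⁆ = ⁅g', h'⁆ := by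
  rw [← mul_inv_cancel_left g g', ← mul_inv_cancel_left h h',
    commutatorElement_mul_mem_center_left _ _ (QuotientGroup.eq.mp hg),
    commutatorElement_mul_mem_center_right _ _ (QuotientGroup.eq.mp hh)]

theorem finite_commutatorSet_of_finite_quotient_center [Finite (G ⧸ Subgroup.center G)] :
    (commutatorSet G).Finite := by
  refine (Set.finite_range fun q : (G ⧸ Subgroup.center G) × (G ⧸ Subgroup.center G) =>
    ⁅q.1.out, q.2.out⁆).subset ?_
  rintro _ ⟨g, h, rfl⟩
  exact ⟨(g, h), commutatorElement_eq_of_mk_eq (QuotientGroup.out_eq' _) (QuotientGroup.out_eq' _)⟩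

end

/-- Schur's theorem: if `G/Z(G)` is finite then the commutator subgroup `G'` is finite. -/
theorem stmt15 {G : Type*} [Group G]
    (h : Finite (G ⧸ Subgroup.center G)) :
    Finite (commutator G) := by
  have : Finite (commutatorSet G) := finite_commutatorSet_of_finite_quotient_center.to_subtype
  infer_instance
end
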